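/- (Fake uniformity of the Cayley–LMR distribution.) If X has the Beta(3/2, 3/2) distribution (the Cayley–LMR case κ = 1), then τ₂ = E(Z²) = 1/3; this is the same value as in the Haar-measure case κ = 0, i.e., as when X has the Beta(1/2, 3/2) distribution, for which E(Z²) = 1/3 as well. -/

import Mathlib

open MeasureTheory
open scoped ENNReal

/-- The Lebesgue density of the `Beta(κ + 1/2, 3/2)` distribution on `[0,1]`:
`x ↦ x^{κ-1/2} (1-x)^{1/2} / B(κ+1/2, 3/2)`, where
`B(p,q) = Γ(p)Γ(q)/Γ(p+q)`. -/
noncomputable def betaDensity (κ : ℝ) : ℝ → ℝ := fun x =>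
  if x ∈ Set.Ioo (0 : ℝ) 1 then
    x ^ (κ - 1 / 2) * (1 - x) ^ ((1 : ℝ) / 2)
      / (Real.Gamma (κ + 1 / 2) * Real.Gamma (3 / 2) / Real.Gamma (κ + 2))
  else 0

/-! Expanding `Z² = T⁴ + 2T²(1 - T²)(2X - 1) + (1 - T²)²(2X - 1)²` and using independence with the
uniform moments `E T² = 1/3`, `E T⁴ = 1/5` gives `E Z² = 1/5 + (4/15) E(2X - 1) + (8/15) E(2X - 1)²`.
For `X ~ Beta(κ + 1/2, 3/2)` the first two moments follow from `B(a + 1, b) = a/(a + b) B(a, b)`, and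
`E Z² = (κ² + κ + 2)/((κ + 2)(κ + 3))`, a rational function of `κ` that equals `1/3` at both
`κ = 0` and `κ = 1`. -/

namespace ProbabilityTheory

open Set

theorem intervalIntegral_rpow_mul_one_sub_rpow {α β : ℝ} (hα : 0 < α) (hβ : 0 < β) :
    ∫ x in (0 : ℝ)..1, x ^ (α - 1) * (1 - x) ^ (β - 1) = beta α β := by
  have hofReal : (∫ x in (0 : ℝ)..1, (x : ℂ) ^ ((α : ℂ) - 1) * (1 - (x : ℂ)) ^ ((β : ℂ) - 1))
      = ((∫ x in (0 : ℝ)..1, x ^ (α - 1) * (1 - x) ^ (β - 1) : ℝ) : ℂ) := by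
    rw [← intervalIntegral.integral_ofReal]
    refine intervalIntegral.integral_congr fun x hx => ?_
    rw [uIcc_of_le zero_le_one] at hx
    push_cast [Complex.ofReal_cpow hx.1, Complex.ofReal_cpow (sub_nonneg.2 hx.2)]
    rfl
  rw [beta_eq_betaIntegralReal α β hα hβ, Complex.betaIntegral, hofReal, Complex.ofReal_re]

theorem beta_add_one_left {α β : ℝ} (hα : 0 < α) (hβ : 0 < β) :
    beta (α + 1) β = α / (α + β) * beta α β := by
  have hαβ : Real.Gamma (α + β) ≠ 0 := (Real.Gamma_pos_of_pos (by linarith)).ne'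
  rw [beta, beta, add_right_comm, Real.Gamma_add_one hα.ne', Real.Gamma_add_one (by linarith)]
  field_simp

theorem betaPDFReal_nonneg {α β : ℝ} (hα : 0 < α) (hβ : 0 < β) (x : ℝ) :
    0 ≤ betaPDFReal α β x := by
  by_cases hx : 0 < x ∧ x < 1
  · exact (betaPDFReal_pos hx.1 hx.2 hα hβ).le
  · simp [betaPDFReal, hx]

theorem integral_pow_betaMeasure {α β : ℝ} (hα : 0 < α) (hβ : 0 < β) (n : ℕ) :
    ∫ x, x ^ n ∂betaMeasure α β = beta (α + n) β / beta α β := by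
  have hpdf : ∀ x, (betaPDF α β x).toReal * x ^ n = (Ioo 0 1).indicator
      (fun x => (beta α β)⁻¹ * (x ^ (α + n - 1) * (1 - x) ^ (β - 1))) x := by
    intro x
    rw [betaPDF, ENNReal.toReal_ofReal (betaPDFReal_nonneg hα hβ x), betaPDFReal]
    by_cases hx : 0 < x ∧ x < 1
    · rw [if_pos hx, indicator_of_mem (show x ∈ Ioo 0 1 from hx), add_sub_right_comm,
        Real.rpow_add_natCast hx.1.ne']
      ring
    · rw [if_neg hx, indicator_of_notMem (show x ∉ Ioo 0 1 from hx), zero_mul]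
  rw [betaMeasure, integral_withDensity_eq_integral_toReal_smul (f := betaPDF α β)
    (ENNReal.measurable_ofReal.comp (measurable_betaPDFReal α β))
    (ae_of_all _ fun x => ENNReal.ofReal_lt_top)]
  simp_rw [smul_eq_mul, hpdf]
  rw [integral_indicator measurableSet_Ioo, ← integral_Ioc_eq_integral_Ioo,
    ← intervalIntegral.integral_of_le zero_le_one, intervalIntegral.integral_const_mul,
    intervalIntegral_rpow_mul_one_sub_rpow (by positivity) hβ, inv_mul_eq_div]

theorem integral_id_betaMeasure {α β : ℝ} (hα : 0 < α) (hβ : 0 < β) :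
    ∫ x, x ∂betaMeasure α β = α / (α + β) := by
  have h := integral_pow_betaMeasure hα hβ 1
  simp only [pow_one, Nat.cast_one] at h
  rw [h, beta_add_one_left hα hβ, mul_div_cancel_right₀ _ (beta_pos hα hβ).ne']

theorem integral_sq_betaMeasure {α β : ℝ} (hα : 0 < α) (hβ : 0 < β) :
    ∫ x, x ^ 2 ∂betaMeasure α β = α * (α + 1) / ((α + β) * (α + β + 1)) := by
  have hαβ : α + β ≠ 0 := by positivity
  have hαβ1 : α + β + 1 ≠ 0 := by positivity
  rw [integral_pow_betaMeasure hα hβ 2, Nat.cast_two, show α + 2 = α + 1 + 1 by ring,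
    beta_add_one_left (by positivity) hβ, beta_add_one_left hα hβ, add_right_comm α 1 β]
  field_simp [(beta_pos hα hβ).ne']

end ProbabilityTheory

open ProbabilityTheory Set

theorem withDensity_betaDensity (κ : ℝ) :
    volume.withDensity (fun x => ENNReal.ofReal (betaDensity κ x))
      = betaMeasure (κ + 1 / 2) (3 / 2) := by
  have hβ : beta (κ + 1 / 2) (3 / 2)
      = Real.Gamma (κ + 1 / 2) * Real.Gamma (3 / 2) / Real.Gamma (κ + 2) := by
    rw [beta]; ring_nf
  unfold betaMeasure betaPDF betaPDFReal betaDensity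
  congr with x
  congr 1
  by_cases hx : 0 < x ∧ x < 1
  · rw [if_pos (show x ∈ Ioo 0 1 from hx), if_pos hx, hβ]
    ring_nf
  · rw [if_neg (show x ∉ Ioo 0 1 from hx), if_neg hx]

theorem integrable_comp_of_ae_mem_isCompact {Ω E : Type*} [MeasurableSpace Ω] {P : Measure Ω}
    [IsFiniteMeasure P] [TopologicalSpace E] [MeasurableSpace E] [OpensMeasurableSpace E]
    {K : Set E} (hK : IsCompact K) {Y : Ω → E} (hY : AEMeasurable Y P) (hYK : ∀ᵐ ω ∂P, Y ω ∈ K)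
    {g : E → ℝ} (hg : Continuous g) :
    Integrable (fun ω => g (Y ω)) P := by
  obtain ⟨C, hC⟩ := hK.exists_bound_of_continuousOn hg.continuousOn
  exact Integrable.of_bound (hg.measurable.comp_aemeasurable hY).aestronglyMeasurable C
    (hYK.mono fun ω hω => hC _ hω)

section UniformIcc

variable {Ω : Type*} [MeasurableSpace Ω] {P : Measure Ω} {T : Ω → ℝ}

theorem ae_mem_Icc_of_map_eq_uniform (hT : AEMeasurable T P)
    (hTu : Measure.map T P = (2 : ℝ≥0∞)⁻¹ • volume.restrict (Icc (-1 : ℝ) 1)) :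
    ∀ᵐ ω ∂P, T ω ∈ Icc (-1 : ℝ) 1 :=
  ae_of_ae_map hT (hTu ▸ Measure.ae_smul_measure (ae_restrict_mem measurableSet_Icc) _)

theorem integral_comp_of_map_eq_uniform (hT : AEMeasurable T P)
    (hTu : Measure.map T P = (2 : ℝ≥0∞)⁻¹ • volume.restrict (Icc (-1 : ℝ) 1))
    {f : ℝ → ℝ} (hf : Continuous f) :
    ∫ ω, f (T ω) ∂P = 2⁻¹ * ∫ t in (-1 : ℝ)..1, f t := by
  rw [← integral_map hT hf.aestronglyMeasurable, hTu, integral_smul_measure,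
    intervalIntegral.integral_of_le (by norm_num), ← integral_Icc_eq_integral_Ioc]
  simp

theorem integral_even_quartic_of_map_eq_uniform (hT : AEMeasurable T P)
    (hTu : Measure.map T P = (2 : ℝ≥0∞)⁻¹ • volume.restrict (Icc (-1 : ℝ) 1)) (a b c : ℝ) :
    ∫ ω, a + b * T ω ^ 2 + c * T ω ^ 4 ∂P = a + b / 3 + c / 5 := by
  rw [integral_comp_of_map_eq_uniform hT hTu (f := fun t => a + b * t ^ 2 + c * t ^ 4)
    (by fun_prop)]
  simp (disch := exact Continuous.intervalIntegrable (by fun_prop) _ _) only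
    [intervalIntegral.integral_add, integral_pow, intervalIntegral.integral_const_mul,
    intervalIntegral.integral_const]
  norm_num
  ring

end UniformIcc

theorem integral_cayleyZ_sq {Ω : Type*} [MeasurableSpace Ω] {P : Measure Ω}
    [IsProbabilityMeasure P] {X T : Ω → ℝ} (hX : AEMeasurable X P) (hT : AEMeasurable T P)
    (hXr : ∀ᵐ ω ∂P, X ω ∈ Icc (0 : ℝ) 1)
    (hTu : Measure.map T P = (2 : ℝ≥0∞)⁻¹ • volume.restrict (Icc (-1 : ℝ) 1))
    (hindep : IndepFun X T P) :
    ∫ ω, (T ω ^ 2 + (1 - T ω ^ 2) * (2 * X ω - 1)) ^ 2 ∂P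
      = 1 / 5 + 4 / 15 * ∫ ω, 2 * X ω - 1 ∂P + 8 / 15 * ∫ ω, (2 * X ω - 1) ^ 2 ∂P := by
  have hint : ∀ g : ℝ × ℝ → ℝ, Continuous g → Integrable (fun ω => g (T ω, X ω)) P :=
    fun g hg => integrable_comp_of_ae_mem_isCompact (isCompact_Icc.prod isCompact_Icc)
      (hT.prodMk hX) ((ae_mem_Icc_of_map_eq_uniform hT hTu).and hXr) hg
  have hmul : ∀ f g : ℝ → ℝ, Continuous f → Continuous g →
      ∫ ω, f (T ω) * g (X ω) ∂P = (∫ ω, f (T ω) ∂P) * ∫ ω, g (X ω) ∂P :=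
    fun f g hf hg => hindep.symm.integral_fun_comp_mul_comp hT hX hf.aestronglyMeasurable
      hg.aestronglyMeasurable
  have hquartic := integral_even_quartic_of_map_eq_uniform hT hTu
  have h4 : ∫ ω, T ω ^ 4 ∂P = 1 / 5 := by simpa using hquartic 0 0 1
  have h22 : ∫ ω, 2 * T ω ^ 2 * (1 - T ω ^ 2) ∂P = 4 / 15 := by
    convert hquartic 0 2 (-2) using 2 <;> [(funext ω; ring); norm_num]
  have h04 : ∫ ω, (1 - T ω ^ 2) ^ 2 ∂P = 8 / 15 := by
    convert hquartic 1 (-2) 1 using 2 <;> [(funext ω; ring); norm_num]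
  calc ∫ ω, (T ω ^ 2 + (1 - T ω ^ 2) * (2 * X ω - 1)) ^ 2 ∂P
      = ∫ ω, T ω ^ 4 + 2 * T ω ^ 2 * (1 - T ω ^ 2) * (2 * X ω - 1)
          + (1 - T ω ^ 2) ^ 2 * (2 * X ω - 1) ^ 2 ∂P := by congr with ω; ring
    _ = ∫ ω, T ω ^ 4 ∂P + ∫ ω, 2 * T ω ^ 2 * (1 - T ω ^ 2) * (2 * X ω - 1) ∂P
          + ∫ ω, (1 - T ω ^ 2) ^ 2 * (2 * X ω - 1) ^ 2 ∂P := by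
      rw [integral_add (hint (fun p => p.1 ^ 4 + 2 * p.1 ^ 2 * (1 - p.1 ^ 2) * (2 * p.2 - 1))
          (by fun_prop)) (hint (fun p => (1 - p.1 ^ 2) ^ 2 * (2 * p.2 - 1) ^ 2) (by fun_prop)),
        integral_add (hint (fun p => p.1 ^ 4) (by fun_prop))
          (hint (fun p => 2 * p.1 ^ 2 * (1 - p.1 ^ 2) * (2 * p.2 - 1)) (by fun_prop))]
    _ = _ := by
      rw [hmul (fun t => 2 * t ^ 2 * (1 - t ^ 2)) (fun x => 2 * x - 1) (by fun_prop) (by fun_prop),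
        hmul (fun t => (1 - t ^ 2) ^ 2) (fun x => (2 * x - 1) ^ 2) (by fun_prop) (by fun_prop),
        h4, h22, h04]

theorem integral_cayleyZ_sq_of_betaDensity {κ : ℝ} (hκ : -1 / 2 < κ) {Ω : Type*}
    [MeasurableSpace Ω] {P : Measure Ω} [IsProbabilityMeasure P] {X T : Ω → ℝ}
    (hX : AEMeasurable X P) (hT : AEMeasurable T P) (hXr : ∀ᵐ ω ∂P, X ω ∈ Icc (0 : ℝ) 1)
    (hTu : Measure.map T P = (2 : ℝ≥0∞)⁻¹ • volume.restrict (Icc (-1 : ℝ) 1))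
    (hindep : IndepFun X T P)
    (hlaw : Measure.map X P = volume.withDensity fun x => ENNReal.ofReal (betaDensity κ x)) :
    ∫ ω, (T ω ^ 2 + (1 - T ω ^ 2) * (2 * X ω - 1)) ^ 2 ∂P
      = (κ ^ 2 + κ + 2) / ((κ + 2) * (κ + 3)) := by
  rw [withDensity_betaDensity] at hlaw
  have hα : 0 < κ + 1 / 2 := by linarith
  have hκ2 : κ + 2 ≠ 0 := by linarith
  have hκ3 : κ + 3 ≠ 0 := by linarith
  have hint : ∀ g : ℝ → ℝ, Continuous g → Integrable (fun ω => g (X ω)) P :=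
    fun g hg => integrable_comp_of_ae_mem_isCompact isCompact_Icc hX hXr hg
  have hm1 : ∫ ω, X ω ∂P = (κ + 1 / 2) / (κ + 2) := by
    rw [← integral_map (f := fun x => x) hX aestronglyMeasurable_id, hlaw,
      integral_id_betaMeasure hα (by norm_num)]
    ring_nf
  have hm2 : ∫ ω, X ω ^ 2 ∂P = (κ + 1 / 2) * (κ + 3 / 2) / ((κ + 2) * (κ + 3)) := by
    rw [← integral_map hX (continuous_pow 2).aestronglyMeasurable, hlaw,
      integral_sq_betaMeasure hα (by norm_num)]
    ring_nf
  have hY1 : ∫ ω, 2 * X ω - 1 ∂P = (κ - 1) / (κ + 2) := by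
    calc ∫ ω, 2 * X ω - 1 ∂P = 2 * ∫ ω, X ω ∂P - 1 := by
          rw [integral_sub ((hint (fun x => x) continuous_id).const_mul 2) (integrable_const 1),
            integral_const_mul]
          simp
      _ = _ := by
          rw [hm1]
          field_simp
          ring
  have hY2 : ∫ ω, (2 * X ω - 1) ^ 2 ∂P = (κ ^ 2 - κ + 3) / ((κ + 2) * (κ + 3)) := by
    have hX1 := (hint (fun x => x) continuous_id).const_mul 4
    have hX2 := (hint (· ^ 2) (continuous_pow 2)).const_mul 4
    calc ∫ ω, (2 * X ω - 1) ^ 2 ∂P = ∫ ω, 4 * X ω ^ 2 - 4 * X ω + 1 ∂P := by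
          congr with ω; ring
      _ = 4 * ∫ ω, X ω ^ 2 ∂P - 4 * ∫ ω, X ω ∂P + 1 := by
          rw [integral_add (hint (fun x => 4 * x ^ 2 - 4 * x) (by fun_prop)) (integrable_const 1),
            integral_sub hX2 hX1, integral_const_mul, integral_const_mul]
          simp
      _ = _ := by
          rw [hm1, hm2]
          field_simp
          ring
  rw [integral_cayleyZ_sq hX hT hXr hTu hindep, hY1, hY2]
  field_simp
  ring

/-- Fake uniformity of the Cayley–LMR distribution: if `X₁ ~ Beta(3/2, 3/2)` (the case
`κ = 1`) then `τ₂ = E(Z₁²) = 1/3`, the same value as in the Haar-measure case `κ = 0`,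
i.e. as when `X₀ ~ Beta(1/2, 3/2)`, for which `E(Z₀²) = 1/3` as well.  Here, as always,
`Tᵢ` is uniform on `[-1,1]` and independent of `Xᵢ`, and
`Zᵢ = Tᵢ² + (1 - Tᵢ²)(2Xᵢ - 1)`. -/
theorem fake_uniformity_cayleyLMR
    {Ω : Type*} [MeasurableSpace Ω] (P : Measure Ω) [IsProbabilityMeasure P]
    (X₁ T₁ X₀ T₀ : Ω → ℝ)
    (hX₁ : Measurable X₁) (hT₁ : Measurable T₁)
    (hX₀ : Measurable X₀) (hT₀ : Measurable T₀)
    (hX₁_range : ∀ ω, X₁ ω ∈ Set.Icc (0 : ℝ) 1)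
    (hX₀_range : ∀ ω, X₀ ω ∈ Set.Icc (0 : ℝ) 1)
    (hT₁_unif : Measure.map T₁ P = (2 : ℝ≥0∞)⁻¹ • volume.restrict (Set.Icc (-1 : ℝ) 1))
    (hT₀_unif : Measure.map T₀ P = (2 : ℝ≥0∞)⁻¹ • volume.restrict (Set.Icc (-1 : ℝ) 1))
    (hindep₁ : ProbabilityTheory.IndepFun X₁ T₁ P)
    (hindep₀ : ProbabilityTheory.IndepFun X₀ T₀ P)
    (hX₁_law : Measure.map X₁ P = volume.withDensity fun x => ENNReal.ofReal (betaDensity 1 x))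
    (hX₀_law : Measure.map X₀ P = volume.withDensity fun x => ENNReal.ofReal (betaDensity 0 x)) :
    (∫ ω, (T₁ ω ^ 2 + (1 - T₁ ω ^ 2) * (2 * X₁ ω - 1)) ^ 2 ∂P) = 1 / 3 ∧
      (∫ ω, (T₀ ω ^ 2 + (1 - T₀ ω ^ 2) * (2 * X₀ ω - 1)) ^ 2 ∂P) = 1 / 3 := by
  rw [integral_cayleyZ_sq_of_betaDensity (by norm_num) hX₁.aemeasurable hT₁.aemeasurable
      (ae_of_all _ hX₁_range) hT₁_unif hindep₁ hX₁_law,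
    integral_cayleyZ_sq_of_betaDensity (by norm_num) hX₀.aemeasurable hT₀.aemeasurable
      (ae_of_all _ hX₀_range) hT₀_unif hindep₀ hX₀_law]
  norm_num
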